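/- arXiv:1405.2779 — 6 statements merged into one kernel-verified Lean document; each statement's English description precedes it below -/
import Mathlib

section
/- If K is a convex closed set in ℝ^d containing the unit ball B, then for every t > 0 the Hausdorff distance between K* and (K + tB)* is at most t. -/
/-! For `u ∈ K*`, shrinking `u` to `(1 + t)⁻¹ • u` puts it into `(K + tB)*`, since
`⟪u, x + t y⟫ ≤ 1 + t` for `x ∈ K`, `y ∈ B ⊆ K`; as `K* ⊆ B* ⊆ B`, this moves `u` by at most `t`.
Conversely `(K + tB)* ⊆ K*` because `K ⊆ K + tB`. -/

open Pointwise Metric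
open scoped RealInnerProductSpace

noncomputable section

def polarSet {d : ℕ} (K : Set (EuclideanSpace ℝ (Fin d))) : Set (EuclideanSpace ℝ (Fin d)) :=
  {u | ∀ x ∈ K, ⟪u, x⟫ ≤ (1 : ℝ)}

section Polar

variable {d : ℕ}

lemma polarSet_anti {K L : Set (EuclideanSpace ℝ (Fin d))} (h : K ⊆ L) :
    polarSet L ⊆ polarSet K :=
  fun _ hu x hx => hu x (h hx)

lemma norm_le_one_of_mem_polarSet_closedBall {u : EuclideanSpace ℝ (Fin d)}
    (hu : u ∈ polarSet (closedBall 0 1)) : ‖u‖ ≤ 1 := by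
  rcases eq_or_ne u 0 with rfl | hu0
  · simp
  have hunit : ‖u‖⁻¹ • u ∈ closedBall (0 : EuclideanSpace ℝ (Fin d)) 1 := by
    simp [norm_smul, hu0]
  have := hu _ hunit
  rwa [real_inner_smul_right, real_inner_self_eq_norm_sq, sq, inv_mul_cancel_left₀
    (norm_ne_zero_iff.2 hu0)] at this

lemma inv_one_add_smul_mem_polarSet_add_smul {K L : Set (EuclideanSpace ℝ (Fin d))}
    {u : EuclideanSpace ℝ (Fin d)} (huK : u ∈ polarSet K) (huL : u ∈ polarSet L)
    {t : ℝ} (ht : 0 ≤ t) : (1 + t)⁻¹ • u ∈ polarSet (K + t • L) := by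
  rintro _ ⟨x, hx, _, ⟨y, hy, rfl⟩, rfl⟩
  have hxy : ⟪u, x + t • y⟫ ≤ 1 + t := by
    rw [inner_add_right, real_inner_smul_right]
    nlinarith [huK x hx, huL y hy]
  rw [real_inner_smul_left, inv_mul_le_iff₀ (by linarith)]
  linarith

end Polar

lemma dist_inv_one_add_smul_le {E : Type*} [NormedAddCommGroup E] [NormedSpace ℝ E]
    (u : E) {t : ℝ} (ht : 0 ≤ t) : dist u ((1 + t)⁻¹ • u) ≤ t * ‖u‖ := by
  have h1t : (0 : ℝ) < 1 + t := by linarith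
  have hcoef : 1 - (1 + t)⁻¹ = t / (1 + t) := by field_simp; ring
  have hsub : u - (1 + t)⁻¹ • u = (1 - (1 + t)⁻¹) • u := by rw [sub_smul, one_smul]
  rw [dist_eq_norm, hsub, norm_smul, hcoef, Real.norm_of_nonneg (by positivity)]
  gcongr
  exact div_le_self ht (by linarith)

theorem hausdorffEdist_polar_add_ball_le_general {d : ℕ}
    (K : Set (EuclideanSpace ℝ (Fin d)))
    (hB : closedBall (0 : EuclideanSpace ℝ (Fin d)) 1 ⊆ K) (t : ℝ) (ht : 0 < t) :
    EMetric.hausdorffEdist (polarSet K)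
        (polarSet (K + t • closedBall (0 : EuclideanSpace ℝ (Fin d)) 1))
      ≤ ENNReal.ofReal t := by
  have hK : K ⊆ K + t • closedBall (0 : EuclideanSpace ℝ (Fin d)) 1 :=
    Set.subset_add_left K ⟨0, mem_closedBall_self zero_le_one, smul_zero t⟩
  apply Metric.hausdorffEDist_le_of_mem_edist
  · intro u hu
    have huB : u ∈ polarSet (closedBall 0 1) := polarSet_anti hB hu
    refine ⟨(1 + t)⁻¹ • u, inv_one_add_smul_mem_polarSet_add_smul hu huB ht.le, ?_⟩
    rw [edist_le_ofReal ht.le]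
    calc dist u ((1 + t)⁻¹ • u) ≤ t * ‖u‖ := dist_inv_one_add_smul_le u ht.le
      _ ≤ t * 1 := by gcongr; exact norm_le_one_of_mem_polarSet_closedBall huB
      _ = t := mul_one t
  · exact fun u hu => ⟨u, polarSet_anti hK hu, by simp⟩

/-- If `K` is a convex closed set containing the unit ball `B`, then for every `t > 0`
the Hausdorff distance between `K*` and `(K + tB)*` is at most `t`. -/
theorem hausdorffEdist_polar_add_ball_le {d : ℕ}
    (K : Set (EuclideanSpace ℝ (Fin d))) (hKcl : IsClosed K) (hKconv : Convex ℝ K)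
    (hB : closedBall (0 : EuclideanSpace ℝ (Fin d)) 1 ⊆ K) (t : ℝ) (ht : 0 < t) :
    EMetric.hausdorffEdist (polarSet K)
        (polarSet (K + t • closedBall (0 : EuclideanSpace ℝ (Fin d)) 1))
      ≤ ENNReal.ofReal t :=
  hausdorffEdist_polar_add_ball_le_general K hB t ht
end
end

section
/- For convex closed sets K, L in ℝ^d both containing the centered ball rB of radius r > 0, the Hausdorff distance between their polars satisfies ρ_H(K*, L*) ≤ r^{-2} ρ_H(K, L). -/
/-! If `u ∈ L*`, the linear form `⟪u, ·⟫` is `‖u‖`-Lipschitz and at most `1` on `L`, hence at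
most `1 + ‖u‖ δ` on any `K` within Hausdorff distance `δ` of `L`; so `(1 + ‖u‖ δ)⁻¹ • u ∈ K*`,
at distance at most `‖u‖² δ` from `u`. Finally `rB ⊆ L` forces `‖u‖ ≤ r⁻¹`. -/

open Pointwise Metric
open scoped RealInnerProductSpace

noncomputable section

section

variable {d : ℕ} {K L : Set (EuclideanSpace ℝ (Fin d))} {u : EuclideanSpace ℝ (Fin d)}

lemma norm_le_inv_of_mem_polarSet {r : ℝ} (hr : 0 < r) (hL : closedBall 0 r ⊆ L)
    (hu : u ∈ polarSet L) : ‖u‖ ≤ r⁻¹ := by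
  rcases eq_or_ne u 0 with rfl | hu0
  · simpa using hr.le
  have hn : 0 < ‖u‖ := norm_pos_iff.2 hu0
  have hmem : (r / ‖u‖) • u ∈ L := hL <| by
    rw [mem_closedBall, dist_zero_right, norm_smul, Real.norm_of_nonneg (by positivity),
      div_mul_cancel₀ _ hn.ne']
  have h : r * ‖u‖ ≤ 1 := by
    simpa [real_inner_smul_right, real_inner_self_eq_norm_sq, hn.ne', sq, div_mul_eq_mul_div,
      mul_div_assoc] using hu _ hmem
  rwa [le_inv_comm₀ (by positivity) hr, inv_eq_one_div, le_div_iff₀ hn]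

lemma inner_le_one_add_norm_mul_infDist (hL : L.Nonempty) (hu : u ∈ polarSet L)
    (x : EuclideanSpace ℝ (Fin d)) : ⟪u, x⟫ ≤ 1 + ‖u‖ * infDist x L := by
  rcases eq_or_ne u 0 with rfl | hu0
  · simp
  have hn : 0 < ‖u‖ := norm_pos_iff.2 hu0
  suffices (⟪u, x⟫ - 1) / ‖u‖ ≤ infDist x L by
    rw [div_le_iff₀ hn] at this
    linarith
  refine (le_infDist hL).2 fun y hy => (div_le_iff₀ hn).2 ?_
  have hxy : ⟪u, x - y⟫ ≤ ‖u‖ * ‖x - y‖ := real_inner_le_norm u (x - y)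
  rw [inner_sub_right, ← dist_eq_norm] at hxy
  linarith [hu y hy]

lemma inv_one_add_smul_mem_polarSet (hL : L.Nonempty) (hKL : hausdorffEDist K L ≠ ⊤)
    (hu : u ∈ polarSet L) : (1 + ‖u‖ * hausdorffDist K L)⁻¹ • u ∈ polarSet K := by
  intro x hx
  have hc : 0 < 1 + ‖u‖ * hausdorffDist K L :=
    add_pos_of_pos_of_nonneg one_pos (mul_nonneg (norm_nonneg u) hausdorffDist_nonneg)
  rw [real_inner_smul_left, inv_mul_le_one₀ hc]
  calc ⟪u, x⟫ ≤ 1 + ‖u‖ * infDist x L := inner_le_one_add_norm_mul_infDist hL hu x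
    _ ≤ 1 + ‖u‖ * hausdorffDist K L := by
      gcongr
      exact infDist_le_hausdorffDist_of_mem hx hKL

end

lemma norm_sub_inv_one_add_smul_le {E : Type*} [SeminormedAddCommGroup E] [NormedSpace ℝ E]
    (u : E) {t : ℝ} (ht : 0 ≤ t) : ‖u - (1 + t)⁻¹ • u‖ ≤ t * ‖u‖ := by
  have h1t : 0 < 1 + t := by positivity
  have hcoef : 1 - (1 + t)⁻¹ = t / (1 + t) := by field_simp; ring
  rw [show u - (1 + t)⁻¹ • u = (1 - (1 + t)⁻¹) • u by rw [sub_smul, one_smul], norm_smul, hcoef, Real.norm_of_nonneg (by positivity)]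
  gcongr
  exact div_le_self ht (by linarith)

lemma exists_mem_polarSet_dist_le {d : ℕ} {K L : Set (EuclideanSpace ℝ (Fin d))} {r : ℝ}
    (hr : 0 < r) (hL : closedBall 0 r ⊆ L) (hKL : hausdorffEDist K L ≠ ⊤)
    {u : EuclideanSpace ℝ (Fin d)} (hu : u ∈ polarSet L) :
    ∃ v ∈ polarSet K, dist u v ≤ r⁻¹ ^ 2 * hausdorffDist K L := by
  have hLne : L.Nonempty := ⟨0, hL (mem_closedBall_self hr.le)⟩
  have hδ : 0 ≤ hausdorffDist K L := hausdorffDist_nonneg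
  have hnorm : ‖u‖ ≤ r⁻¹ := norm_le_inv_of_mem_polarSet hr hL hu
  refine ⟨_, inv_one_add_smul_mem_polarSet hLne hKL hu, ?_⟩
  calc dist u _ ≤ ‖u‖ * hausdorffDist K L * ‖u‖ :=
        (dist_eq_norm _ _).trans_le (norm_sub_inv_one_add_smul_le u (by positivity))
    _ = ‖u‖ ^ 2 * hausdorffDist K L := by ring
    _ ≤ r⁻¹ ^ 2 * hausdorffDist K L := by gcongr

lemma hausdorffEDist_polarSet_le_of_ne_top {d : ℕ} {K L : Set (EuclideanSpace ℝ (Fin d))}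
    {r : ℝ} (hr : 0 < r) (hK : closedBall 0 r ⊆ K) (hL : closedBall 0 r ⊆ L)
    (hKL : hausdorffEDist K L ≠ ⊤) :
    hausdorffEDist (polarSet K) (polarSet L)
      ≤ ENNReal.ofReal (r⁻¹ ^ 2 * hausdorffDist K L) := by
  have hLK : hausdorffEDist L K ≠ ⊤ := by rwa [hausdorffEDist_comm]
  apply hausdorffEDist_le_of_mem_edist
  · intro u hu
    obtain ⟨v, hv, huv⟩ := exists_mem_polarSet_dist_le hr hK hLK hu
    rw [hausdorffDist_comm] at huv
    exact ⟨v, hv, edist_dist u v ▸ ENNReal.ofReal_le_ofReal huv⟩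
  · intro u hu
    obtain ⟨v, hv, huv⟩ := exists_mem_polarSet_dist_le hr hL hKL hu
    exact ⟨v, hv, edist_dist u v ▸ ENNReal.ofReal_le_ofReal huv⟩

theorem hausdorffEdist_polar_le_general {d : ℕ}
    (K L : Set (EuclideanSpace ℝ (Fin d))) (r : ℝ) (hr : 0 < r)
    (hK : closedBall (0 : EuclideanSpace ℝ (Fin d)) r ⊆ K)
    (hL : closedBall (0 : EuclideanSpace ℝ (Fin d)) r ⊆ L) :
    EMetric.hausdorffEdist (polarSet K) (polarSet L)
      ≤ ENNReal.ofReal (r⁻¹ ^ 2) * EMetric.hausdorffEdist K L := by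
  by_cases hKL : hausdorffEDist K L = ⊤
  · rw [EMetric.hausdorffEdist, hKL, ENNReal.mul_top (by positivity)]
    exact le_top
  calc hausdorffEDist (polarSet K) (polarSet L)
      ≤ ENNReal.ofReal (r⁻¹ ^ 2 * hausdorffDist K L) :=
        hausdorffEDist_polarSet_le_of_ne_top hr hK hL hKL
    _ = ENNReal.ofReal (r⁻¹ ^ 2) * hausdorffEDist K L := by
      rw [ENNReal.ofReal_mul (by positivity), hausdorffDist, ENNReal.ofReal_toReal hKL]

/-- For convex closed sets `K, L ⊆ ℝ^d` both containing the centred ball of radius `r > 0`,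
`ρ_H(K*, L*) ≤ r⁻² ρ_H(K, L)`. -/
theorem hausdorffEdist_polar_le {d : ℕ}
    (K L : Set (EuclideanSpace ℝ (Fin d))) (hKcl : IsClosed K) (hKconv : Convex ℝ K)
    (hLcl : IsClosed L) (hLconv : Convex ℝ L) (r : ℝ) (hr : 0 < r)
    (hK : closedBall (0 : EuclideanSpace ℝ (Fin d)) r ⊆ K)
    (hL : closedBall (0 : EuclideanSpace ℝ (Fin d)) r ⊆ L) :
    EMetric.hausdorffEdist (polarSet K) (polarSet L)
      ≤ ENNReal.ofReal (r⁻¹ ^ 2) * EMetric.hausdorffEdist K L :=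
  hausdorffEdist_polar_le_general K L r hr hK hL
end
end

section
/- Let (K, ≤, +, e) be a partially ordered abelian semigroup with e ≤ x for all x, addition compatible with order, and an order-reversing involution *. Then the n-th approximant z_n = [x_1,…,x_n] of a continued fraction is increasing in each even-indexed entry and decreasing in each odd-indexed entry; consequently the even approximants z_{2m} form an increasing sequence and the odd approximants z_{2m−1} form a decreasing sequence. -/
/-!
Each level of a continued fraction applies the order-reversing map `s` once, so the value
depends monotonically or antitonically on an entry according to the parity of its depth.
Moreover the last entries of `[x₁,…,x_{n+2}]` fold into one: it equals
`[x₁,…,x_{n-1}, xₙ + [x_{n+1}, x_{n+2}]]`, whose last entry dominates that of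
`[x₁,…,xₙ]` because `e` is the least element. So `zₙ` and `z_{n+2}` differ by increasing the
`n`-th entry.
-/

/-- The continued fraction `[x₁,…,xₙ]` on a semigroup with involution `s`:
`[x] = s x` and `[x₁,…,x_{n+1}] = s (x₁ + [x₂,…,x_{n+1}])`.
(The value on the empty list is an irrelevant placeholder.) -/
def cf {K : Type*} [AddCommMonoid K] (s : K → K) : List K → K
  | [] => s 0
  | [x] => s x
  | x :: y :: l => s (x + cf s (y :: l))

section AddCommMonoid

variable {K : Type*} [AddCommMonoid K] (s : K → K)

theorem cf_cons_of_ne_nil (z : K) {l : List K} (hl : l ≠ []) :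
    cf s (z :: l) = s (z + cf s l) := by
  cases l with
  | nil => exact absurd rfl hl
  | cons y t => rfl

theorem cf_append_cons_of_ne_nil (l : List K) (a : K) {r : List K} (hr : r ≠ []) :
    cf s (l ++ a :: r) = cf s (l ++ [a + cf s r]) := by
  induction l with
  | nil => exact cf_cons_of_ne_nil s a hr
  | cons z t ih =>
    simp only [List.cons_append]
    rw [cf_cons_of_ne_nil s z (by simp), cf_cons_of_ne_nil s z (by simp), ih]

variable [PartialOrder K] [AddLeftMono K] {s}

theorem cf_append_cons_antitone_of_even_monotone_of_odd (hs : Antitone s) (l₁ l₂ : List K) :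
    (Even l₁.length → Antitone fun x => cf s (l₁ ++ x :: l₂)) ∧
      (Odd l₁.length → Monotone fun x => cf s (l₁ ++ x :: l₂)) := by
  induction l₁ with
  | nil =>
    refine ⟨fun _ => ?_, fun h => absurd h (by simp)⟩
    cases l₂ with
    | nil => exact hs
    | cons y t =>
      simp only [List.nil_append, cf_cons_of_ne_nil s _ (List.cons_ne_nil y t)]
      exact hs.comp_monotone add_left_mono
  | cons z t ih =>
    have hstep : Antitone fun c => s (z + c) := hs.comp_monotone add_right_mono
    have hne (x : K) : t ++ x :: l₂ ≠ [] := by simp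
    simp only [List.cons_append, List.length_cons, Nat.even_add_one, Nat.odd_add_one,
      Nat.not_even_iff_odd, Nat.not_odd_iff_even, cf_cons_of_ne_nil s z (hne _)]
    exact ⟨fun h => hstep.comp_monotone (ih.2 h), fun h => hstep.comp (ih.1 h)⟩

theorem cf_append_singleton_le_of_odd (hs : Antitone s) (h0 : ∀ x : K, 0 ≤ x)
    {l : List K} (hl : Odd l.length) (a : K) {r : List K}
    (hr : r ≠ []) : cf s (l ++ [a]) ≤ cf s (l ++ a :: r) := by
  rw [cf_append_cons_of_ne_nil s l a hr]
  exact (cf_append_cons_antitone_of_even_monotone_of_odd hs l []).2 hl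
    (le_add_of_nonneg_right (h0 _))

theorem cf_append_le_singleton_of_even (hs : Antitone s) (h0 : ∀ x : K, 0 ≤ x)
    {l : List K} (hl : Even l.length) (a : K) {r : List K}
    (hr : r ≠ []) : cf s (l ++ a :: r) ≤ cf s (l ++ [a]) := by
  rw [cf_append_cons_of_ne_nil s l a hr]
  exact (cf_append_cons_antitone_of_even_monotone_of_odd hs l []).1 hl
    (le_add_of_nonneg_right (h0 _))

end AddCommMonoid

theorem List.ofFn_coe_add {α : Type*} (x : ℕ → α) (n k : ℕ) :
    (List.ofFn fun i : Fin (n + k) => x i) =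
      (List.ofFn fun i : Fin n => x i) ++ List.ofFn fun i : Fin k => x (n + i) := by
  rw [List.ofFn_add]
  simp

theorem cf_monotonicity_general {K : Type*} [AddCommMonoid K] [PartialOrder K] (s : K → K)
    (hbot : ∀ x : K, 0 ≤ x)
    (hadd : ∀ a b c : K, a ≤ b → a + c ≤ b + c)
    (hanti : ∀ a b : K, a ≤ b → s b ≤ s a) :
    (∀ (l₁ l₂ : List K) (x x' : K), x ≤ x' →
      (l₁.length % 2 = 1 → cf s (l₁ ++ x :: l₂) ≤ cf s (l₁ ++ x' :: l₂)) ∧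
      (l₁.length % 2 = 0 → cf s (l₁ ++ x' :: l₂) ≤ cf s (l₁ ++ x :: l₂))) ∧
    (∀ (x : ℕ → K) (m : ℕ), 1 ≤ m →
      cf s (List.ofFn fun i : Fin (2 * m) => x i) ≤
        cf s (List.ofFn fun i : Fin (2 * m + 2) => x i) ∧
      cf s (List.ofFn fun i : Fin (2 * m + 1) => x i) ≤
        cf s (List.ofFn fun i : Fin (2 * m - 1) => x i)) := by
  have : AddLeftMono K := ⟨fun c a b h => by simpa only [add_comm c] using hadd a b c h⟩
  have hs : Antitone s := fun a b h => hanti a b h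
  refine ⟨fun l₁ l₂ x x' hx => ?_, fun x m hm => ?_⟩
  · have hmono := cf_append_cons_antitone_of_even_monotone_of_odd hs l₁ l₂
    exact ⟨fun h => hmono.2 (Nat.odd_iff.2 h) hx, fun h => hmono.1 (Nat.even_iff.2 h) hx⟩
  obtain ⟨k, rfl⟩ := Nat.exists_eq_add_of_le' hm
  rw [show 2 * (k + 1) = 2 * k + 1 + 1 by ring, show 2 * k + 1 + 1 + 2 = 2 * k + 1 + 3 by ring,
    show 2 * k + 1 + 1 + 1 = 2 * k + 3 by ring, show 2 * k + 1 + 1 - 1 = 2 * k + 1 by omega]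
  constructor
  · rw [List.ofFn_coe_add x (2 * k + 1) 1, List.ofFn_coe_add x (2 * k + 1) 3]
    simp only [List.ofFn_succ, List.ofFn_zero]
    exact cf_append_singleton_le_of_odd hs hbot (by simp) _ (List.cons_ne_nil _ _)
  · rw [List.ofFn_coe_add x (2 * k) 3, List.ofFn_coe_add x (2 * k) 1]
    simp only [List.ofFn_succ, List.ofFn_zero]
    exact cf_append_le_singleton_of_even hs hbot (by simp) _ (List.cons_ne_nil _ _)

/-- The `n`-th approximant of a continued fraction on a partially ordered abelian semigroup
with an order-reversing involution is increasing in every even-numbered entry and decreasing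
in every odd-numbered entry (entries numbered from 1); consequently the even approximants
increase and the odd approximants decrease. -/
theorem cf_monotonicity {K : Type*} [AddCommMonoid K] [PartialOrder K] (s : K → K)
    (hbot : ∀ x : K, 0 ≤ x)
    (hadd : ∀ a b c : K, a ≤ b → a + c ≤ b + c)
    (hanti : ∀ a b : K, a ≤ b → s b ≤ s a)
    (hinv : ∀ a : K, s (s a) = a)
    (habs : ∀ a : K, s 0 + a = s 0) :
    (∀ (l₁ l₂ : List K) (x x' : K), x ≤ x' →
      (l₁.length % 2 = 1 → cf s (l₁ ++ x :: l₂) ≤ cf s (l₁ ++ x' :: l₂)) ∧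
      (l₁.length % 2 = 0 → cf s (l₁ ++ x' :: l₂) ≤ cf s (l₁ ++ x :: l₂))) ∧
    (∀ (x : ℕ → K) (m : ℕ), 1 ≤ m →
      cf s (List.ofFn fun i : Fin (2 * m) => x i) ≤
        cf s (List.ofFn fun i : Fin (2 * m + 2) => x i) ∧
      cf s (List.ofFn fun i : Fin (2 * m + 1) => x i) ≤
        cf s (List.ofFn fun i : Fin (2 * m - 1) => x i)) :=
  cf_monotonicity_general s hbot hadd hanti
end

section
/- Let r_i, R_i be reals with 0 < r_i ≤ R_i. If r_i·h ≤ x_i ≤ R_i·h for a self-polar element h (h* = h) in a partially ordered abelian semigroup with order-reversing involution, compatible scaling by positive reals with (a·x)* = a^{-1}·x*, then [R_1, r_2, R_3, …]·h ≤ [x_1,…,x_n] ≤ [r_1, R_2, r_3, …]·h, where the scalar continued fractions are formed with the reciprocal as involution and the bounds alternate starting with R_1 (resp. r_1). -/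
open scoped NNReal

/-- The numerical continued fraction `[b₁,…,bₙ] = 1/(b₁ + 1/(b₂ + ⋯ + 1/bₙ))` on `ℝ≥0`. -/
noncomputable def numcf : List ℝ≥0 → ℝ≥0
  | [] => 0
  | [b] => b⁻¹
  | b :: c :: l => (b + numcf (c :: l))⁻¹

/-!
Induction on the length. Since `*` reverses order and `(a h)* = a⁻¹ h`, an upper bound
`[x₁,…] ≤ q h` on the tail gives `x₀ + [x₁,…] ≤ (R₀ + q) h`, hence the lower bound
`(R₀ + q)⁻¹ h ≤ [x₀,…]`, and symmetrically; so the roles of `r` and `R` swap at every level.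
-/

lemma cf_cons {K : Type*} [AddCommMonoid K] (s : K → K) (a : K) {l : List K} (hl : l ≠ []) :
    cf s (a :: l) = s (a + cf s l) := by
  cases l with
  | nil => contradiction
  | cons b t => rfl

lemma numcf_cons (b : ℝ≥0) {l : List ℝ≥0} (hl : l ≠ []) :
    numcf (b :: l) = (b + numcf l)⁻¹ := by
  cases l with
  | nil => contradiction
  | cons c t => rfl

lemma List.ofFn_ite_mod_two_succ {α : Type*} (a b : ℕ → α) (m : ℕ) :
    List.ofFn (fun i : Fin (m + 1) => if i.val % 2 = 0 then a i else b i) =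
      a 0 :: List.ofFn (fun i : Fin m => if i.val % 2 = 0 then b (i + 1) else a (i + 1)) := by
  rw [List.ofFn_succ]
  congr 2 with i
  rcases Nat.mod_two_eq_zero_or_one i.val with hi | hi <;> simp [Nat.succ_mod_two_eq_zero_iff, hi]

section Sandwich

variable {K : Type*} [AddCommMonoid K] [PartialOrder K] [Module ℝ≥0 K]
  {s : K → K} {h : K}

lemma inv_smul_le_of_le_smul (hs : Antitone s) (hh : s h = h)
    (hscale : ∀ (a : ℝ≥0) (x : K), 0 < a → s (a • x) = a⁻¹ • s x)
    {a : ℝ≥0} {y : K} (ha : 0 < a) (hy : y ≤ a • h) : a⁻¹ • h ≤ s y := by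
  simpa only [hscale a h ha, hh] using hs hy

lemma le_inv_smul_of_smul_le (hs : Antitone s) (hh : s h = h)
    (hscale : ∀ (a : ℝ≥0) (x : K), 0 < a → s (a • x) = a⁻¹ • s x)
    {a : ℝ≥0} {y : K} (ha : 0 < a) (hy : a • h ≤ y) : s y ≤ a⁻¹ • h := by
  simpa only [hscale a h ha, hh] using hs hy

theorem numcf_smul_le_cf_ofFn_and_cf_ofFn_le_numcf_smul [IsOrderedAddMonoid K]
    (hs : Antitone s) (hh : s h = h)
    (hscale : ∀ (a : ℝ≥0) (x : K), 0 < a → s (a • x) = a⁻¹ • s x)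
    (m : ℕ) (x : ℕ → K) (r R : ℕ → ℝ≥0) (hr : ∀ i, 0 < r i) (hR : ∀ i, 0 < R i)
    (hxl : ∀ i, r i • h ≤ x i) (hxu : ∀ i, x i ≤ R i • h) :
    numcf (List.ofFn fun i : Fin (m + 1) => if i.val % 2 = 0 then R i else r i) • h ≤
        cf s (List.ofFn fun i : Fin (m + 1) => x i) ∧
      cf s (List.ofFn fun i : Fin (m + 1) => x i) ≤
        numcf (List.ofFn fun i : Fin (m + 1) => if i.val % 2 = 0 then r i else R i) • h := by
  induction m generalizing x r R with
  | zero =>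
    exact ⟨inv_smul_le_of_le_smul hs hh hscale (hR 0) (hxu 0),
      le_inv_smul_of_smul_le hs hh hscale (hr 0) (hxl 0)⟩
  | succ m ih =>
    obtain ⟨tail_lower, tail_upper⟩ := ih (fun i => x (i + 1)) (fun i => r (i + 1))
      (fun i => R (i + 1)) (fun i => hr _) (fun i => hR _) (fun i => hxl _) (fun i => hxu _)
    rw [List.ofFn_ite_mod_two_succ R r, List.ofFn_ite_mod_two_succ r R,
      List.ofFn_succ (f := fun i : Fin (m + 2) => x i), cf_cons s _ (by simp),
      numcf_cons _ (by simp), numcf_cons _ (by simp)]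
    constructor
    · refine inv_smul_le_of_le_smul hs hh hscale (add_pos_of_pos_of_nonneg (hR 0) zero_le) ?_
      rw [add_smul]
      exact add_le_add (hxu 0) tail_upper
    · refine le_inv_smul_of_smul_le hs hh hscale (add_pos_of_pos_of_nonneg (hr 0) zero_le) ?_
      rw [add_smul]
      exact add_le_add (hxl 0) tail_lower

end Sandwich

theorem cf_sandwich_general {K : Type*} [AddCommMonoid K] [PartialOrder K] [Module ℝ≥0 K]
    (s : K → K) (h : K)
    (hadd : ∀ a b c : K, a ≤ b → a + c ≤ b + c)
    (hanti : ∀ a b : K, a ≤ b → s b ≤ s a)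
    (hself : s h = h)
    (hscale : ∀ (a : ℝ≥0) (x : K), 0 < a → s (a • x) = a⁻¹ • s x)
    (n : ℕ) (hn : 1 ≤ n) (x : ℕ → K) (r R : ℕ → ℝ≥0)
    (hr : ∀ i, 0 < r i) (hrR : ∀ i, r i ≤ R i)
    (hxl : ∀ i, r i • h ≤ x i) (hxu : ∀ i, x i ≤ R i • h) :
    numcf (List.ofFn fun i : Fin n => if i.val % 2 = 0 then R i else r i) • h ≤
        cf s (List.ofFn fun i : Fin n => x i) ∧
      cf s (List.ofFn fun i : Fin n => x i) ≤
        numcf (List.ofFn fun i : Fin n => if i.val % 2 = 0 then r i else R i) • h := by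
  have : IsOrderedAddMonoid K := { add_le_add_left := fun a b hab c => hadd a b c hab }
  obtain ⟨m, rfl⟩ : ∃ m, n = m + 1 := ⟨n - 1, by omega⟩
  exact numcf_smul_le_cf_ofFn_and_cf_ofFn_le_numcf_smul (fun a b => hanti a b) hself hscale
    m x r R hr (fun i => (hr i).trans_le (hrR i)) hxl hxu

/-- If `rᵢ h ≤ xᵢ ≤ Rᵢ h` for a self-polar `h` in a partially ordered abelian semigroup with
order-reversing involution and compatible positive scaling with `(a x)* = a⁻¹ x*`, then
`[R₁, r₂, R₃, …] h ≤ [x₁,…,xₙ] ≤ [r₁, R₂, r₃, …] h` (the scalar continued fractions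
alternate, starting with `R₁` resp. `r₁`). -/
theorem cf_sandwich {K : Type*} [AddCommMonoid K] [PartialOrder K] [Module ℝ≥0 K]
    (s : K → K) (h : K)
    (hbot : ∀ x : K, 0 ≤ x)
    (hadd : ∀ a b c : K, a ≤ b → a + c ≤ b + c)
    (hanti : ∀ a b : K, a ≤ b → s b ≤ s a)
    (hinv : ∀ a : K, s (s a) = a)
    (hself : s h = h)
    (hscale : ∀ (a : ℝ≥0) (x : K), 0 < a → s (a • x) = a⁻¹ • s x)
    (n : ℕ) (hn : 1 ≤ n) (x : ℕ → K) (r R : ℕ → ℝ≥0)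
    (hr : ∀ i, 0 < r i) (hrR : ∀ i, r i ≤ R i)
    (hxl : ∀ i, r i • h ≤ x i) (hxu : ∀ i, x i ≤ R i • h) :
    numcf (List.ofFn fun i : Fin n => if i.val % 2 = 0 then R i else r i) • h ≤
        cf s (List.ofFn fun i : Fin n => x i) ∧
      cf s (List.ofFn fun i : Fin n => x i) ≤
        numcf (List.ofFn fun i : Fin n => if i.val % 2 = 0 then r i else R i) • h :=
  cf_sandwich_general s h hadd hanti hself hscale n hn x r R hr hrR hxl hxu
end

section
/- In a partially ordered abelian semigroup K with closed order induced by a self-polar h (i.e., x ≤ y + t·h for all t > 0 implies x ≤ y), the function ρ_h(x,y) = inf{t ≥ 0 : x ≤ y + t·h and y ≤ x + t·h} is a metric on K_h = {x : x ≤ a·h for some a > 0}, and the order relation {(x,y) : x ≤ y} is closed in (K_h, ρ_h) × (K_h, ρ_h). -/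
/-! If `ρ_h(x, y) < t` for `x, y ∈ K_h`, then `x ≤ y + t h` and `y ≤ x + t h`. Such bounds
compose additively, `x ≤ y + s h ≤ z + (s + t) h`, which gives the triangle inequality, and the
closedness hypothesis turns "`x ≤ y + t h` for every `t > 0`" into `x ≤ y`, which gives both the
separation of points and the closedness of the order. -/

open Filter
open scoped NNReal Topology

noncomputable section

/-- The distance `ρ_h(x,y) = inf{t ≥ 0 : x ≤ y + t h, y ≤ x + t h}`. -/
def rhoS {K : Type*} [AddCommMonoid K] [PartialOrder K] [Module ℝ≥0 K] (h : K) (x y : K) :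
    ℝ≥0 :=
  sInf {t : ℝ≥0 | x ≤ y + t • h ∧ y ≤ x + t • h}

section

variable {K : Type*} [AddCommMonoid K] [PartialOrder K] [Module ℝ≥0 K] {h x y z : K}

theorem rhoS_comm (h x y : K) : rhoS h x y = rhoS h y x := by
  simp only [rhoS, and_comm]

theorem rhoS_le_of_le_add_smul {t : ℝ≥0} (hxy : x ≤ y + t • h) (hyx : y ≤ x + t • h) :
    rhoS h x y ≤ t :=
  csInf_le (OrderBot.bddBelow _) ⟨hxy, hyx⟩

theorem rhoS_self (h x : K) : rhoS h x x = 0 :=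
  nonpos_iff_eq_zero.mp (rhoS_le_of_le_add_smul (by simp) (by simp))

variable [IsOrderedAddMonoid K]

theorem le_add_smul_mono (hbot : ∀ x : K, 0 ≤ x) {s t : ℝ≥0} (hst : s ≤ t)
    (hs : x ≤ y + s • h) : x ≤ y + t • h :=
  calc x ≤ y + s • h := hs
    _ ≤ y + s • h + (t - s) • h := le_add_of_nonneg_right (hbot _)
    _ = y + t • h := by rw [add_assoc, ← add_smul, add_tsub_cancel_of_le hst]

theorem le_add_smul_trans {s t : ℝ≥0} (hxy : x ≤ y + s • h) (hyz : y ≤ z + t • h) :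
    x ≤ z + (s + t) • h :=
  calc x ≤ y + s • h := hxy
    _ ≤ z + t • h + s • h := add_le_add_left hyz _
    _ = z + (s + t) • h := by rw [add_smul, add_assoc, add_comm (t • h)]

theorem le_add_smul_of_rhoS_lt (hbot : ∀ x : K, 0 ≤ x) {a b t : ℝ≥0} (hx : x ≤ a • h)
    (hy : y ≤ b • h) (ht : rhoS h x y < t) : x ≤ y + t • h ∧ y ≤ x + t • h := by
  -- The bounds make the infimum range over a nonempty set (in `ℝ≥0`, `sInf ∅ = 0`).
  have hab : x ≤ y + (a + b) • h ∧ y ≤ x + (a + b) • h :=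
    ⟨le_add_smul_mono hbot le_self_add (hx.trans (le_add_of_nonneg_left (hbot y))),
      le_add_smul_mono hbot le_add_self (hy.trans (le_add_of_nonneg_left (hbot x)))⟩
  obtain ⟨s, ⟨hxy, hyx⟩, hst⟩ := exists_lt_of_csInf_lt ⟨a + b, hab⟩ ht
  exact ⟨le_add_smul_mono hbot hst.le hxy, le_add_smul_mono hbot hst.le hyx⟩

theorem rhoS_eq_zero_iff (hbot : ∀ x : K, 0 ≤ x)
    (hsep : ∀ x y : K, (∀ t : ℝ≥0, 0 < t → x ≤ y + t • h) → x ≤ y) {a b : ℝ≥0}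
    (hx : x ≤ a • h) (hy : y ≤ b • h) : rhoS h x y = 0 ↔ x = y := by
  refine ⟨fun h0 => ?_, fun hxy => hxy ▸ rhoS_self h x⟩
  have hlt {t : ℝ≥0} (ht : 0 < t) := le_add_smul_of_rhoS_lt hbot hx hy (h0 ▸ ht)
  exact le_antisymm (hsep x y fun _ ht => (hlt ht).1) (hsep y x fun _ ht => (hlt ht).2)

theorem rhoS_triangle (hbot : ∀ x : K, 0 ≤ x) {a b c : ℝ≥0} (hx : x ≤ a • h)
    (hy : y ≤ b • h) (hz : z ≤ c • h) : rhoS h x z ≤ rhoS h x y + rhoS h y z := by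
  refine le_of_forall_pos_le_add fun ε hε => ?_
  set s := rhoS h x y + ε / 2
  set t := rhoS h y z + ε / 2
  obtain ⟨hxy, hyx⟩ := le_add_smul_of_rhoS_lt hbot hx hy (lt_add_of_pos_right _ (half_pos hε))
  obtain ⟨hyz, hzy⟩ := le_add_smul_of_rhoS_lt hbot hy hz (lt_add_of_pos_right _ (half_pos hε))
  have hzx : z ≤ x + (s + t) • h := add_comm s t ▸ le_add_smul_trans hzy hyx
  calc rhoS h x z ≤ s + t := rhoS_le_of_le_add_smul (le_add_smul_trans hxy hyz) hzx
    _ = rhoS h x y + rhoS h y z + ε := by rw [add_add_add_comm, add_halves]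

theorem le_of_tendsto_rhoS {ι : Type*} {l : Filter ι} [l.NeBot] (hbot : ∀ x : K, 0 ≤ x)
    (hsep : ∀ x y : K, (∀ t : ℝ≥0, 0 < t → x ≤ y + t • h) → x ≤ y)
    {xs ys : ι → K} {a b : ℝ≥0} (hx : x ≤ a • h) (hy : y ≤ b • h)
    (hxs : ∀ i, ∃ a : ℝ≥0, xs i ≤ a • h) (hys : ∀ i, ∃ b : ℝ≥0, ys i ≤ b • h)
    (hle : ∀ i, xs i ≤ ys i)
    (hxs_lim : Tendsto (fun i => rhoS h (xs i) x) l (𝓝 0))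
    (hys_lim : Tendsto (fun i => rhoS h (ys i) y) l (𝓝 0)) : x ≤ y := by
  refine hsep x y fun t ht => ?_
  obtain ⟨i, hxi, hyi⟩ := ((hxs_lim.eventually (gt_mem_nhds (half_pos ht))).and
    (hys_lim.eventually (gt_mem_nhds (half_pos ht)))).exists
  obtain ⟨a', hxa⟩ := hxs i
  obtain ⟨b', hyb⟩ := hys i
  have hx_le : x ≤ ys i + (t / 2) • h :=
    (le_add_smul_of_rhoS_lt hbot hxa hx hxi).2.trans (add_le_add_left (hle i) _)
  simpa only [add_halves] using le_add_smul_trans hx_le (le_add_smul_of_rhoS_lt hbot hyb hy hyi).1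

end

/-- If `x ≤ y + t h` for all `t > 0` implies `x ≤ y`, then `ρ_h` is a metric on
`K_h = {x : x ≤ a h for some a > 0}` and the order is closed with respect to it. -/
theorem rhoS_metric_and_closed_order {K : Type*} [AddCommMonoid K] [PartialOrder K]
    [Module ℝ≥0 K] (h : K)
    (hbot : ∀ x : K, 0 ≤ x)
    (hadd : ∀ a b c : K, a ≤ b → a + c ≤ b + c)
    (hsep : ∀ x y : K, (∀ t : ℝ≥0, 0 < t → x ≤ y + t • h) → x ≤ y) :
    (∀ x ∈ {x : K | ∃ a : ℝ≥0, 0 < a ∧ x ≤ a • h},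
      ∀ y ∈ {x : K | ∃ a : ℝ≥0, 0 < a ∧ x ≤ a • h}, (rhoS h x y = 0 ↔ x = y)) ∧
    (∀ x y : K, rhoS h x y = rhoS h y x) ∧
    (∀ x ∈ {x : K | ∃ a : ℝ≥0, 0 < a ∧ x ≤ a • h},
      ∀ y ∈ {x : K | ∃ a : ℝ≥0, 0 < a ∧ x ≤ a • h},
      ∀ z ∈ {x : K | ∃ a : ℝ≥0, 0 < a ∧ x ≤ a • h},
        rhoS h x z ≤ rhoS h x y + rhoS h y z) ∧
    (∀ (xs ys : ℕ → K) (x y : K),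
      (∃ a : ℝ≥0, 0 < a ∧ x ≤ a • h) → (∃ a : ℝ≥0, 0 < a ∧ y ≤ a • h) →
      (∀ n, (∃ a : ℝ≥0, 0 < a ∧ xs n ≤ a • h) ∧ (∃ a : ℝ≥0, 0 < a ∧ ys n ≤ a • h) ∧
        xs n ≤ ys n) →
      Tendsto (fun n => rhoS h (xs n) x) atTop (𝓝 0) →
      Tendsto (fun n => rhoS h (ys n) y) atTop (𝓝 0) → x ≤ y) := by
  have : IsOrderedAddMonoid K := { add_le_add_left := fun a b hab c => hadd a b c hab }
  refine ⟨?_, rhoS_comm h, ?_, ?_⟩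
  · rintro x ⟨a, -, hx⟩ y ⟨b, -, hy⟩
    exact rhoS_eq_zero_iff hbot hsep hx hy
  · rintro x ⟨a, -, hx⟩ y ⟨b, -, hy⟩ z ⟨c, -, hz⟩
    exact rhoS_triangle hbot hx hy hz
  · rintro xs ys x y ⟨a, -, hx⟩ ⟨b, -, hy⟩ hseq hxs_lim hys_lim
    exact le_of_tendsto_rhoS hbot hsep hx hy (fun n => (hseq n).1.imp fun _ => And.right)
      (fun n => (hseq n).2.1.imp fun _ => And.right) (fun n => (hseq n).2.2) hxs_lim hys_lim
end
end

section
/- Let h be self-polar in a partially ordered abelian semigroup with order-reversing involution and positive scaling with (a x)* = a^{-1} x*. Suppose the Lipschitz-type condition ρ_h(x*, (x+th)*) ≤ C_R² t holds for all t > 0 whenever h ≤ x ≤ R h, with C_R nondecreasing. Then for all x, y with r h ≤ x ≤ R h and r h ≤ y ≤ R h, ρ_h(x*, y*) ≤ C_{R/r}² r^{-2} ρ_h(x, y). -/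
open scoped NNReal

noncomputable section

/-! Rescaling by `a⁻¹` transports the hypothesis, stated for `h ≤ x ≤ S h`, to points with
`a h ≤ x ≤ M h`, with constant `C_{M/a}² a⁻²`, because `(a⁻¹ x)* = a x*`. Scaling by a real
number need not be monotone, but `q • ·` is for rational `q`: for natural `q` by additivity,
and `q⁻¹ • ·` is conjugate to `q • ·` under the order-reversing involution. So we only rescale
by rationals.

For `r h ≤ x ≤ R h` and `y ≤ x + t h`, take a rational `a = r + ε` slightly above `r` and chain
`x* ≤ (x + εh)* + O(ε) h`, `(x + εh)* ≤ (y + εh)* + C_{R/r}² r⁻² t h`, `(y + εh)* ≤ y*`.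
The middle step works at scale `a` on `[a h, (R + ε) h]`, and `(R + ε)/(r + ε) ≤ R/r`
keeps its constant below `C_{R/r}² r⁻²` with no continuity of `C`. -/

open Filter Topology

namespace NNReal

lemma exists_nnrat_btwn {a b : ℝ≥0} (hab : a < b) : ∃ q : ℚ≥0, a < q ∧ (q : ℝ≥0) < b := by
  obtain ⟨q, haq, hqb⟩ := exists_rat_btwn (NNReal.coe_lt_coe.2 hab)
  have hq : (0 : ℝ) ≤ q := a.2.trans haq.le
  refine ⟨q.toNNRat, ?_, ?_⟩ <;> rw [← NNReal.coe_lt_coe] <;>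
    simpa [Rat.toNNRat, hq, Rat.cast_nonneg.1 hq]

lemma exists_gt_mul_lt {b x c : ℝ≥0} (hbx : b * x < c) : ∃ y, x < y ∧ b * y < c := by
  have hcont : Tendsto (b * ·) (𝓝[>] x) (𝓝 (b * x)) :=
    ((continuous_const_mul b).tendsto x).mono_left nhdsWithin_le_nhds
  obtain ⟨y, hyc, hxy⟩ := ((hcont.eventually (gt_mem_nhds hbx)).and self_mem_nhdsWithin).exists
  exact ⟨y, hxy, hyc⟩

lemma add_div_add_le_div {r R ε : ℝ≥0} (hr : 0 < r) (hrR : r ≤ R) :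
    (R + ε) / (r + ε) ≤ R / r := by
  rw [div_le_div_iff₀ (hr.trans_le le_self_add) hr, add_mul, mul_add, mul_comm ε r]
  gcongr

end NNReal

section

variable {K : Type*} [AddCommMonoid K] [PartialOrder K] [Module ℝ≥0 K]

structure IsScalingInvolution (s : K → K) : Prop where
  antitone : Antitone s
  involutive : Function.Involutive s
  smul_of_pos : ∀ (a : ℝ≥0) (x : K), 0 < a → s (a • x) = a⁻¹ • s x

namespace IsScalingInvolution

variable {s : K → K}

lemma monotone_inv_smul (hs : IsScalingInvolution s) {a : ℝ≥0} (ha : 0 < a)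
    (hmono : Monotone fun u : K => a • u) : Monotone fun u : K => a⁻¹ • u := by
  intro u v huv
  have := hs.antitone (hmono (hs.antitone huv))
  rwa [hs.smul_of_pos _ _ ha, hs.smul_of_pos _ _ ha, hs.involutive, hs.involutive] at this

lemma monotone_nnratCast_smul [IsOrderedAddMonoid K] (hs : IsScalingInvolution s) (q : ℚ≥0) :
    Monotone fun u : K => (q : ℝ≥0) • u := by
  have hnat (n : ℕ) : Monotone fun u : K => (n : ℝ≥0) • u := fun u v huv => by
    simpa only [Nat.cast_smul_eq_nsmul] using nsmul_le_nsmul_right huv n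
  have hden := hs.monotone_inv_smul (by exact_mod_cast q.den_pos) (hnat q.den)
  intro u v huv
  simpa only [NNRat.cast_def, div_eq_mul_inv, mul_smul] using hnat q.num (hden huv)

end IsScalingInvolution

variable {h u v : K}

lemma rhoS_le_of_forall_lt {b : ℝ≥0} (H : ∀ c, b < c → u ≤ v + c • h ∧ v ≤ u + c • h) :
    rhoS h u v ≤ b :=
  le_of_forall_gt_imp_ge_of_dense fun c hc => csInf_le (OrderBot.bddBelow _) (H c hc)

variable [IsOrderedAddMonoid K]

lemma smul_le_smul_of_le_left (hbot : ∀ x : K, 0 ≤ x) {a b : ℝ≥0} (hab : a ≤ b) (x : K) :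
    a • x ≤ b • x := by
  rw [← add_tsub_cancel_of_le hab, add_smul]
  exact le_add_of_nonneg_right (hbot _)

lemma le_add_smul_of_rhoS_lt_s17 (hbot : ∀ x : K, 0 ≤ x) {M c : ℝ≥0} (hu : u ≤ M • h)
    (hv : v ≤ M • h) (hρ : rhoS h u v < c) : u ≤ v + c • h ∧ v ≤ u + c • h := by
  have hne : {t : ℝ≥0 | u ≤ v + t • h ∧ v ≤ u + t • h}.Nonempty :=
    ⟨M, hu.trans (le_add_of_nonneg_left (hbot v)), hv.trans (le_add_of_nonneg_left (hbot u))⟩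
  obtain ⟨t, ⟨hut, hvt⟩, htc⟩ := exists_lt_of_csInf_lt hne hρ
  have hth (w : K) : w + t • h ≤ w + c • h :=
    add_le_add_right (smul_le_smul_of_le_left hbot htc.le h) w
  exact ⟨hut.trans (hth v), hvt.trans (hth u)⟩

variable {s : K → K} {C : ℝ≥0 → ℝ≥0}

lemma involution_le_add_smul_of_le_of_rhoS_lt (hbot : ∀ x : K, 0 ≤ x) (hanti : Antitone s)
    (hself : s h = h) {t c : ℝ≥0} (hu : h ≤ u) (hρ : rhoS h (s u) (s (u + t • h)) < c) :
    s u ≤ s (u + t • h) + c • h := by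
  have hsu : s u ≤ (1 : ℝ≥0) • h := by
    rw [one_smul, ← hself]; exact hanti hu
  have hsut : s (u + t • h) ≤ (1 : ℝ≥0) • h := by
    rw [one_smul, ← hself]; exact hanti (hu.trans (le_add_of_nonneg_right (hbot _)))
  exact (le_add_smul_of_rhoS_lt_s17 hbot hsu hsut hρ).1

lemma involution_le_add_smul_of_smul_le (hbot : ∀ x : K, 0 ≤ x) (hs : IsScalingInvolution s)
    (hself : s h = h)
    (hcond : ∀ (S : ℝ≥0) (x : K) (t : ℝ≥0), 0 < t → h ≤ x → x ≤ S • h →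
      rhoS h (s x) (s (x + t • h)) ≤ C S ^ 2 * t)
    {a M t c : ℝ≥0} (ha : 0 < a) (hmono : Monotone fun u : K => a⁻¹ • u)
    (hu : a • h ≤ u) (huM : u ≤ M • h) (ht : 0 < t) (hvu : v ≤ u + t • h)
    (hc : C (M / a) ^ 2 * t / a ^ 2 < c) : s u ≤ s v + c • h := by
  have hu' : h ≤ a⁻¹ • u := by simpa [smul_smul, ha.ne'] using hmono hu
  have huM' : a⁻¹ • u ≤ (M / a) • h := by simpa [smul_smul, div_eq_inv_mul] using hmono huM
  have hc' : C (M / a) ^ 2 * (t / a) < a * c := by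
    calc C (M / a) ^ 2 * (t / a) = a * (C (M / a) ^ 2 * t / a ^ 2) := by
          field_simp
      _ < a * c := mul_lt_mul_of_pos_left hc ha
  have key := involution_le_add_smul_of_le_of_rhoS_lt hbot hs.antitone hself hu'
    ((hcond _ _ _ (div_pos ht ha) hu' huM').trans_lt hc')
  have hshift : a⁻¹ • u + (t / a) • h = a⁻¹ • (u + t • h) := by
    rw [smul_add, smul_smul, div_eq_inv_mul]
  rw [hshift, hs.smul_of_pos _ _ (inv_pos.2 ha), hs.smul_of_pos _ _ (inv_pos.2 ha), inv_inv,
    mul_smul, ← smul_add] at key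
  calc s u = a⁻¹ • a • s u := (inv_smul_smul₀ ha.ne' _).symm
    _ ≤ a⁻¹ • a • (s (u + t • h) + c • h) := hmono key
    _ = s (u + t • h) + c • h := inv_smul_smul₀ ha.ne' _
    _ ≤ s v + c • h := add_le_add_left (hs.antitone hvu) _

lemma involution_le_add_smul (hbot : ∀ x : K, 0 ≤ x) (hs : IsScalingInvolution s)
    (hself : s h = h) (hC : Monotone C)
    (hcond : ∀ (S : ℝ≥0) (x : K) (t : ℝ≥0), 0 < t → h ≤ x → x ≤ S • h →
      rhoS h (s x) (s (x + t • h)) ≤ C S ^ 2 * t)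
    {r R t c : ℝ≥0} {x y : K} (hr : 0 < r) (hrR : r ≤ R) (hx1 : r • h ≤ x) (hx2 : x ≤ R • h)
    (ht : 0 < t) (hyx : y ≤ x + t • h) (hc : C (R / r) ^ 2 * (r⁻¹) ^ 2 * t < c) :
    s x ≤ s y + c • h := by
  have hmono (q : ℚ≥0) : Monotone fun u : K => (q : ℝ≥0)⁻¹ • u := by
    simpa only [NNRat.cast_inv] using hs.monotone_nnratCast_smul q⁻¹
  obtain ⟨c₂, hc₂, hc₂c⟩ := exists_between hc
  obtain ⟨a₁, ha₁, ha₁r⟩ := NNReal.exists_nnrat_btwn hr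
  obtain ⟨δ, hδ, hδc⟩ := exists_pos_mul_lt (tsub_pos_of_lt hc₂c) (C (R / a₁) ^ 2 / a₁ ^ 2)
  obtain ⟨a₂, hra₂, ha₂δ⟩ := NNReal.exists_nnrat_btwn (lt_add_of_pos_right r hδ)
  set ε := (a₂ : ℝ≥0) - r
  have ha₂ : (a₂ : ℝ≥0) = r + ε := (add_tsub_cancel_of_le hra₂.le).symm
  have hx : s x ≤ s (x + ε • h) + (c - c₂) • h := by
    refine involution_le_add_smul_of_smul_le hbot hs hself hcond ha₁ (hmono a₁)
      ((smul_le_smul_of_le_left hbot ha₁r.le h).trans hx1) hx2 (tsub_pos_of_lt hra₂) le_rfl ?_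
    calc C (R / a₁) ^ 2 * ε / a₁ ^ 2 = C (R / a₁) ^ 2 / a₁ ^ 2 * ε := by ring
      _ ≤ C (R / a₁) ^ 2 / a₁ ^ 2 * δ := by gcongr; exact tsub_le_iff_left.2 ha₂δ.le
      _ < c - c₂ := hδc
  have hxy : s (x + ε • h) ≤ s (y + ε • h) + c₂ • h := by
    refine involution_le_add_smul_of_smul_le hbot hs hself hcond (hr.trans hra₂) (hmono a₂)
      (M := R + ε) (by rw [ha₂, add_smul]; gcongr) (by rw [add_smul]; gcongr) ht
      (by rw [add_right_comm]; gcongr) (lt_of_le_of_lt ?_ hc₂)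
    calc C ((R + ε) / a₂) ^ 2 * t / a₂ ^ 2 ≤ C (R / r) ^ 2 * t / r ^ 2 := by
          rw [ha₂]; gcongr; exacts [hC (NNReal.add_div_add_le_div hr hrR), le_self_add]
      _ = C (R / r) ^ 2 * (r⁻¹) ^ 2 * t := by rw [inv_pow, div_eq_mul_inv]; ring
  have hy : s (y + ε • h) ≤ s y := hs.antitone (le_add_of_nonneg_right (hbot _))
  calc s x ≤ s (y + ε • h) + c₂ • h + (c - c₂) • h := hx.trans (by gcongr)
    _ ≤ s y + c₂ • h + (c - c₂) • h := by gcongr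
    _ = s y + c • h := by rw [add_assoc, ← add_smul, add_tsub_cancel_of_le hc₂c.le]

end

/-- If `ρ_h(x*, (x + t h)*) ≤ C_S² t` whenever `h ≤ x ≤ S h`, with `C` nondecreasing, then
`ρ_h(x*, y*) ≤ C_{R/r}² r⁻² ρ_h(x, y)` whenever `r h ≤ x, y ≤ R h`. -/
theorem involution_lipschitz {K : Type*} [AddCommMonoid K] [PartialOrder K] [Module ℝ≥0 K]
    (s : K → K) (h : K)
    (hbot : ∀ x : K, 0 ≤ x)
    (hadd : ∀ a b c : K, a ≤ b → a + c ≤ b + c)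
    (hanti : ∀ a b : K, a ≤ b → s b ≤ s a)
    (hinv : ∀ a : K, s (s a) = a)
    (hself : s h = h)
    (hscale : ∀ (a : ℝ≥0) (x : K), 0 < a → s (a • x) = a⁻¹ • s x)
    (C : ℝ≥0 → ℝ≥0) (hC : Monotone C)
    (hcond : ∀ (S : ℝ≥0) (x : K) (t : ℝ≥0), 0 < t → h ≤ x → x ≤ S • h →
      rhoS h (s x) (s (x + t • h)) ≤ C S ^ 2 * t)
    (r R : ℝ≥0) (hr : 0 < r) (hrR : r ≤ R) (x y : K)
    (hx1 : r • h ≤ x) (hx2 : x ≤ R • h) (hy1 : r • h ≤ y) (hy2 : y ≤ R • h) :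
    rhoS h (s x) (s y) ≤ C (R / r) ^ 2 * (r⁻¹) ^ 2 * rhoS h x y := by
  have : IsOrderedAddMonoid K := { add_le_add_left := fun a b hab c => hadd a b c hab }
  have hs : IsScalingInvolution s := ⟨hanti, hinv, hscale⟩
  refine rhoS_le_of_forall_lt fun c hc => ?_
  obtain ⟨t, hρt, htc⟩ := NNReal.exists_gt_mul_lt hc
  obtain ⟨hxy, hyx⟩ := le_add_smul_of_rhoS_lt_s17 hbot hx2 hy2 hρt
  have ht : 0 < t := pos_of_gt hρt
  exact ⟨involution_le_add_smul hbot hs hself hC hcond hr hrR hx1 hx2 ht hyx htc,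
    involution_le_add_smul hbot hs hself hC hcond hr hrR hy1 hy2 ht hxy htc⟩
end
end
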